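/- Let p be a prime, n ≥ 1, and let A ⊆ (ZMod p)^n be 𝓔-compressed. Then A is a down-set in the coordinatewise partial order: if a ∈ A and b ∈ (ZMod p)^n satisfies b_j ≤ a_j (as integers in {0, …, p−1}) for every coordinate j, then b ∈ A. -/

import Mathlib

open Pointwise

/-- `u ≺ v` in the lexicographic order: `u i < v i` (as values in `{0,…,p-1}`)
at the largest coordinate `i` where `u` and `v` differ. -/
def lexLt {n p : ℕ} (u v : Fin n → ZMod p) : Prop :=
  ∃ i : Fin n, (u i).val < (v i).val ∧ ∀ j : Fin n, i < j → u j = v j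

/-- The `v`-line through `u`: `L_v^u = {u + k•v : k ∈ ZMod p}`. -/
def line {n p : ℕ} (v u : Fin n → ZMod p) : Set (Fin n → ZMod p) :=
  {x | ∃ k : ZMod p, x = u + k • v}

/-- `IS k L`: the set of the `k` lexicographically smallest elements of `L`. -/
def IS {n p : ℕ} (k : ℕ) (L : Set (Fin n → ZMod p)) : Set (Fin n → ZMod p) :=
  {x | x ∈ L ∧ ({y | y ∈ L ∧ lexLt y x}).ncard < k}

/-- The `v`-compression of `A`: on each `v`-line `L`, replace `A ∩ L` by the
initial segment of `L` of the same cardinality. -/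
def comp {n p : ℕ} (v : Fin n → ZMod p) (A : Set (Fin n → ZMod p)) :
    Set (Fin n → ZMod p) :=
  ⋃ u : Fin n → ZMod p, IS (A ∩ line v u).ncard (line v u)

/-- `E = {0, e₁, …, e_n}`: zero together with the standard basis. -/
def stdE (n p : ℕ) : Set (Fin n → ZMod p) :=
  {0} ∪ Set.range (fun i : Fin n => Pi.single i (1 : ZMod p))

/-- `A` is `𝓔`-compressed: `E ⊆ A` and `A` is `v`-compressed for every nonzero `v`
whose compression keeps `E` inside the set. -/
def ECompressed {n p : ℕ} (A : Set (Fin n → ZMod p)) : Prop :=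
  stdE n p ⊆ A ∧
    ∀ v : Fin n → ZMod p, v ≠ 0 → stdE n p ⊆ comp v A → comp v A = A

/-!
On a line in a coordinate direction `eⱼ` the lexicographic order is the order of the `j`-th
coordinate, so an `eⱼ`-compressed set is closed under lowering the `j`-th coordinate of its
points. Each `eⱼ`-compression keeps `E` inside the set: the points of an `eⱼ`-line below a point
of `E` have `j`-th coordinate `0`, hence lie in `E ⊆ A` again. So an `𝓔`-compressed set is
`eⱼ`-compressed for every `j`, and lowering the coordinates of `a` one at a time reaches `b`.
-/

theorem mem_of_forall_update_mem {ι β : Type*} [Fintype ι] [DecidableEq ι]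
    (r : β → β → Prop)
    {A : Set (ι → β)} (hA : ∀ a ∈ A, ∀ j c, r c (a j) → Function.update a j c ∈ A)
    {a b : ι → β} (ha : a ∈ A) (hba : ∀ j, r (b j) (a j)) : b ∈ A := by
  suffices ∀ s : Finset ι, s.piecewise b a ∈ A by simpa using this Finset.univ
  intro s
  induction s using Finset.induction with
  | empty => simpa using ha
  | insert j s hj ih =>
    rw [Finset.piecewise_insert]
    exact hA _ ih j (b j) (by simpa [hj] using hba j)

section Line

variable {n p : ℕ}

theorem lexLt_irrefl (x : Fin n → ZMod p) : ¬ lexLt x x :=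
  fun ⟨_, h, _⟩ => lt_irrefl _ h

theorem mem_line_self (v u : Fin n → ZMod p) : u ∈ line v u :=
  ⟨0, by simp⟩

theorem line_eq_of_mem {v u x : Fin n → ZMod p} (hx : x ∈ line v u) : line v x = line v u := by
  obtain ⟨k, rfl⟩ := hx
  ext y
  constructor
  · rintro ⟨m, rfl⟩
    exact ⟨k + m, by rw [add_smul, add_assoc]⟩
  · rintro ⟨m, rfl⟩
    exact ⟨m - k, by rw [sub_smul, add_assoc, add_sub_cancel]⟩

theorem mem_comp_iff {v x : Fin n → ZMod p} {A : Set (Fin n → ZMod p)} :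
    x ∈ comp v A ↔ {y | y ∈ line v x ∧ lexLt y x}.ncard < (A ∩ line v x).ncard := by
  simp only [comp, IS, Set.mem_iUnion, Set.mem_ofPred_eq]
  constructor
  · rintro ⟨u, hx, h⟩
    rwa [line_eq_of_mem hx]
  · exact fun h => ⟨x, mem_line_self v x, h⟩

theorem mem_comp_of_forall_lexLt_mem [NeZero p] {v x : Fin n → ZMod p}
    {A : Set (Fin n → ZMod p)} (hx : x ∈ A) (hA : ∀ y ∈ line v x, lexLt y x → y ∈ A) :
    x ∈ comp v A := by
  have hsub : {y | y ∈ line v x ∧ lexLt y x} ⊆ A ∩ line v x :=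
    fun y hy => ⟨hA y hy.1 hy.2, hy.1⟩
  refine mem_comp_iff.mpr (Set.ncard_lt_ncard ((Set.ssubset_iff_of_subset hsub).mpr ?_))
  exact ⟨x, ⟨hx, mem_line_self v x⟩, fun h => lexLt_irrefl x h.2⟩

end Line

section CoordinateLine

variable {n p : ℕ} {j : Fin n}

theorem mem_line_single_iff {u x : Fin n → ZMod p} :
    x ∈ line (Pi.single j 1) u ↔ ∀ i ≠ j, x i = u i := by
  constructor
  · rintro ⟨k, rfl⟩ i hi
    simp [hi]
  · intro h
    refine ⟨x j - u j, funext fun i => ?_⟩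
    rcases eq_or_ne i j with rfl | hi
    · simp
    · simp [h i hi, hi]

theorem update_mem_line_single (x : Fin n → ZMod p) (j : Fin n) (c : ZMod p) :
    Function.update x j c ∈ line (Pi.single j 1) x :=
  mem_line_single_iff.mpr fun _ hi => Function.update_of_ne hi c x

theorem eq_update_of_mem_line_single {x y : Fin n → ZMod p} (hy : y ∈ line (Pi.single j 1) x) :
    y = Function.update x j (y j) := by
  funext i
  rcases eq_or_ne i j with rfl | hi
  · simp
  · rw [Function.update_of_ne hi, mem_line_single_iff.mp hy i hi]

theorem lexLt_iff_of_mem_line_single {x y : Fin n → ZMod p} (hy : y ∈ line (Pi.single j 1) x) :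
    lexLt y x ↔ (y j).val < (x j).val := by
  rw [mem_line_single_iff] at hy
  constructor
  · rintro ⟨i, hlt, -⟩
    rcases eq_or_ne i j with rfl | hi
    · exact hlt
    · exact absurd hlt (by rw [hy i hi]; exact lt_irrefl _)
  · exact fun h => ⟨j, h, fun i hi => hy i hi.ne'⟩

theorem ZMod.ncard_setOf_val_lt [NeZero p] {t : ℕ} (ht : t ≤ p) :
    {c : ZMod p | c.val < t}.ncard = t := by
  have himage : ZMod.val '' {c : ZMod p | c.val < t} = ↑(Finset.range t) := by
    ext m
    simp only [Set.mem_image, Set.mem_ofPred_eq, Finset.coe_range, Set.mem_Iio]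
    constructor
    · rintro ⟨c, hc, rfl⟩
      exact hc
    · intro hm
      have hval := ZMod.val_natCast_of_lt (n := p) (hm.trans_le ht)
      exact ⟨m, by rwa [hval], hval⟩
  rw [← Set.ncard_image_of_injective _ (ZMod.val_injective p), himage, Set.ncard_coe_finset,
    Finset.card_range]

theorem ncard_lexLt_on_line_single [NeZero p] (x : Fin n → ZMod p) :
    {y | y ∈ line (Pi.single j 1) x ∧ lexLt y x}.ncard = (x j).val := by
  have hset : {y | y ∈ line (Pi.single j 1) x ∧ lexLt y x}
      = Function.update x j '' {c : ZMod p | c.val < (x j).val} := by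
    ext y
    constructor
    · rintro ⟨hy, hlt⟩
      exact ⟨y j, (lexLt_iff_of_mem_line_single hy).mp hlt,
        (eq_update_of_mem_line_single hy).symm⟩
    · rintro ⟨c, hc, rfl⟩
      have hline := update_mem_line_single x j c
      exact ⟨hline, (lexLt_iff_of_mem_line_single hline).mpr (by simpa using hc)⟩
  rw [hset, Set.ncard_image_of_injective _ (Function.update_injective x j),
    ZMod.ncard_setOf_val_lt (ZMod.val_lt (x j)).le]

theorem mem_comp_single_iff [NeZero p] {x : Fin n → ZMod p} {A : Set (Fin n → ZMod p)} :
    x ∈ comp (Pi.single j 1) A ↔ (x j).val < (A ∩ line (Pi.single j 1) x).ncard := by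
  rw [mem_comp_iff, ncard_lexLt_on_line_single]

theorem update_mem_of_comp_single_eq [NeZero p] {A : Set (Fin n → ZMod p)}
    (hA : comp (Pi.single j 1) A = A) {a : Fin n → ZMod p} (ha : a ∈ A) {c : ZMod p}
    (hc : c.val ≤ (a j).val) : Function.update a j c ∈ A := by
  rw [← hA, mem_comp_single_iff] at ha ⊢
  rw [line_eq_of_mem (update_mem_line_single a j c)]
  simpa using hc.trans_lt ha

theorem update_zero_mem_stdE {x : Fin n → ZMod p} (hx : x ∈ stdE n p) :
    Function.update x j 0 ∈ stdE n p := by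
  rcases hx with rfl | ⟨i, rfl⟩
  · exact Or.inl (by simp)
  rcases eq_or_ne i j with rfl | hij
  · exact Or.inl (by simp [Pi.single, Function.update_idem])
  · rw [Function.update_eq_self_iff.mpr (Pi.single_eq_of_ne' hij 1).symm]
    exact Or.inr ⟨i, rfl⟩

theorem stdE_subset_comp_single [Fact (1 < p)] {A : Set (Fin n → ZMod p)}
    (hE : stdE n p ⊆ A) : stdE n p ⊆ comp (Pi.single j 1) A := by
  intro x hx
  refine mem_comp_of_forall_lexLt_mem (hE hx) fun y hy hlt => ?_
  have hxj : (x j).val ≤ 1 := by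
    rcases hx with rfl | ⟨i, rfl⟩
    · simp
    · rcases eq_or_ne j i with rfl | hji
      · simp [ZMod.val_one]
      · simp [hji]
  have hyj : y j = 0 := by
    rw [lexLt_iff_of_mem_line_single hy] at hlt
    exact (ZMod.val_eq_zero _).mp (by omega)
  rw [eq_update_of_mem_line_single hy, hyj]
  exact hE (update_zero_mem_stdE hx)

theorem ECompressed.comp_single_eq [Fact (1 < p)] {A : Set (Fin n → ZMod p)}
    (hA : ECompressed A) (j : Fin n) : comp (Pi.single j 1) A = A :=
  hA.2 _ (Pi.single_ne_zero_iff.mpr one_ne_zero) (stdE_subset_comp_single hA.1)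

end CoordinateLine

theorem statement9_general (p n : ℕ) (hp : p.Prime)
    (A : Set (Fin n → ZMod p)) (hA : ECompressed A)
    (a b : Fin n → ZMod p) (ha : a ∈ A)
    (hba : ∀ j : Fin n, (b j).val ≤ (a j).val) :
    b ∈ A := by
  have : Fact (1 < p) := ⟨hp.one_lt⟩
  refine mem_of_forall_update_mem (fun c d : ZMod p => c.val ≤ d.val) ?_ ha hba
  exact fun a ha j c hc => update_mem_of_comp_single_eq (hA.comp_single_eq j) ha hc

theorem statement9 (p n : ℕ) (hp : p.Prime) (hn : 1 ≤ n)
    (A : Set (Fin n → ZMod p)) (hA : ECompressed A)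
    (a b : Fin n → ZMod p) (ha : a ∈ A)
    (hba : ∀ j : Fin n, (b j).val ≤ (a j).val) :
    b ∈ A :=
  statement9_general p n hp A hA a b ha hba
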